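/- The X-ray transform on the torus is injective on L¹ functions: if f ∈ L¹(𝕋^n), n ≥ 2, and for every nonzero v ∈ ℤ^n the function x ↦ ∫₀¹ f(x+tv) dt equals 0 almost everywhere, then f = 0 almost everywhere. -/

import Mathlib

/-!
Pass to the torus `𝕋ⁿ = ℝⁿ/ℤⁿ`. Given `k ∈ ℤⁿ`, choose `v ∈ ℤⁿ \ {0}` with `v ⬝ k = 0` (possible
as `n ≥ 2`). The character `e_k` is then constant along the lines `t ↦ y + t v`, so translation
invariance of Haar measure and Fubini turn the `k`-th Fourier coefficient of `f` into the integral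
of `e_k` against the X-ray transform of `f` in direction `v`, which vanishes. Trigonometric
polynomials are dense in `C(𝕋ⁿ, ℂ)`, hence `f` integrates to zero against every continuous
function, and approximating indicators of closed sets by continuous functions gives `f = 0` a.e.
-/

open MeasureTheory Real Filter Topology Set BoundedContinuousFunction
open scoped NNReal

theorem ae_eq_zero_of_integral_boundedContinuous_smul_eq_zero {X E : Type*} [TopologicalSpace X]
    [HasOuterApproxClosed X] [MeasurableSpace X] [BorelSpace X] [NormedAddCommGroup E]
    [NormedSpace ℝ E] [CompleteSpace E] {μ : Measure X} {F : X → E} (hF : Integrable F μ)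
    (h : ∀ G : X →ᵇ ℝ≥0, ∫ x, (G x : ℝ) • F x ∂μ = 0) : F =ᵐ[μ] 0 := by
  refine ae_eq_zero_of_forall_setIntegral_isClosed_eq_zero hF fun s hs => ?_
  have hlim : Tendsto (fun n => ∫ x, (hs.apprSeq n x : ℝ) • F x ∂μ) atTop
      (𝓝 (∫ x, s.indicator F x ∂μ)) := by
    refine tendsto_integral_of_dominated_convergence (fun x => ‖F x‖)
      (fun n => ?_) hF.norm (fun n => ?_) (ae_of_all _ fun x => ?_)
    · exact (NNReal.continuous_coe.comp (hs.apprSeq n).continuous).aestronglyMeasurable.smul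
        hF.aestronglyMeasurable
    · refine ae_of_all _ fun x => ?_
      rw [norm_smul, NNReal.norm_eq]
      exact mul_le_of_le_one_left (norm_nonneg _) (HasOuterApproxClosed.apprSeq_apply_le_one hs n x)
    · have hx := (NNReal.continuous_coe.tendsto _).comp <|
        (continuous_apply x).continuousAt.tendsto.comp (HasOuterApproxClosed.tendsto_apprSeq hs)
      have hind : s.indicator F x = NNReal.toReal (s.indicator (fun _ => 1) x) • F x := by
        by_cases hxs : x ∈ s <;> simp [hxs]
      rw [hind]
      exact hx.smul_const (F x)
  simp only [h, integral_indicator hs.measurableSet] at hlim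
  exact tendsto_nhds_unique hlim tendsto_const_nhds

section Averaging

variable {G : Type*} [AddGroup G] [MeasurableSpace G] [MeasurableAdd₂ G]
  {μ : Measure G} [SFinite μ] [μ.IsAddRightInvariant]

theorem MeasureTheory.Integrable.comp_add_prod {E T : Type*} [NormedAddCommGroup E]
    [MeasurableSpace T] {ν : Measure T} [IsFiniteMeasure ν] {F : G → E} (hF : Integrable F μ)
    {c : T → G} (hc : Measurable c) :
    Integrable (fun p : G × T => F (p.1 + c p.2)) (μ.prod ν) := by
  have hqmp : Measure.QuasiMeasurePreserving (fun p : G × T => p.1 + c p.2) (μ.prod ν) μ :=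
    Measure.quasiMeasurePreserving_fst.comp <| (measurePreserving_add_prod μ (ν.map c)).comp
      ((MeasurePreserving.id μ).prod ⟨hc, rfl⟩) |>.quasiMeasurePreserving
  refine (integrable_prod_iff' (hF.aestronglyMeasurable.comp_quasiMeasurePreserving hqmp)).2
    ⟨ae_of_all _ fun t => hF.comp_add_right (c t), ?_⟩
  have hnorm (t : T) : ∫ y, ‖F (y + c t)‖ ∂μ = ∫ y, ‖F y‖ ∂μ :=
    integral_add_right_eq_self (fun y => ‖F y‖) (c t)
  simp only [Function.comp_apply, hnorm]
  exact integrable_const _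

theorem integral_mul_eq_zero_of_intervalIntegral_comp_add_eq_zero {χ F : G → ℂ}
    (hF : Integrable F μ) (hχ : AEStronglyMeasurable χ μ) {C : ℝ} (hχC : ∀ y, ‖χ y‖ ≤ C)
    {c : ℝ → G} (hc : Measurable c) (hχc : ∀ y t, χ (y + c t) = χ y)
    (hX : ∀ᵐ y ∂μ, ∫ t in (0 : ℝ)..1, F (y + c t) = 0) :
    ∫ y, χ y * F y ∂μ = 0 := by
  have htranslate (t : ℝ) : ∫ y, χ y * F (y + c t) ∂μ = ∫ y, χ y * F y ∂μ := by
    have := integral_add_right_eq_self (μ := μ) (fun y => χ y * F y) (c t)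
    simpa only [hχc] using this
  have hint : Integrable (fun p : G × ℝ => χ p.1 * F (p.1 + c p.2))
      (μ.prod (volume.restrict (Ioc 0 1))) :=
    (hF.comp_add_prod hc).bdd_mul
      (hχ.comp_quasiMeasurePreserving Measure.quasiMeasurePreserving_fst)
      (ae_of_all _ fun p => hχC p.1)
  calc ∫ y, χ y * F y ∂μ
      = ∫ t in Ioc (0 : ℝ) 1, ∫ y, χ y * F (y + c t) ∂μ := by simp [htranslate]
    _ = ∫ y, χ y * (∫ t in (0 : ℝ)..1, F (y + c t)) ∂μ := by
      rw [← integral_integral_swap hint]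
      simp only [intervalIntegral.integral_of_le zero_le_one, integral_const_mul]
    _ = 0 := integral_eq_zero_of_ae (hX.mono fun y hy => by simp [hy])

end Averaging

namespace UnitAddTorus

variable {ι : Type*}

variable (ι) in
noncomputable def mk : (ι → ℝ) →+ UnitAddTorus ι := (QuotientAddGroup.mk' _).compLeft ι

@[simp] lemma mk_apply (x : ι → ℝ) (i : ι) : mk ι x i = (x i : UnitAddCircle) := rfl

theorem measurePreserving_mk [Fintype ι] (a : ι → ℝ) :
    MeasurePreserving (mk ι) (volume.restrict (univ.pi fun i => Ioc (a i) (a i + 1))) volume := by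
  have := measurePreserving_pi (fun i => volume.restrict (Ioc (a i) (a i + 1))) (fun _ => volume)
    (fun i => UnitAddCircle.measurePreserving_mk (a i))
  rwa [← Measure.restrict_pi_pi] at this

theorem ae_comp_mk [Fintype ι] {p : UnitAddTorus ι → Prop} (h : ∀ᵐ y, p y) :
    ∀ᵐ x, p (mk ι x) := by
  have hcover : (⋃ m : ι → ℤ, univ.pi fun i => Ioc (m i : ℝ) (m i + 1)) = univ := by
    refine eq_univ_of_forall fun x => mem_iUnion.2 ⟨fun i => ⌈x i⌉ - 1, fun i _ => ?_⟩
    constructor <;> push_cast <;> linarith [Int.le_ceil (x i), Int.ceil_lt_add_one (x i)]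
  rw [← Measure.restrict_univ (μ := volume), ← hcover, ae_restrict_iUnion_iff]
  exact fun m => (measurePreserving_mk _).quasiMeasurePreserving.ae h

noncomputable def reprIoc (y : UnitAddTorus ι) : ι → ℝ := fun i => AddCircle.equivIoc 1 0 (y i)

@[simp] lemma mk_reprIoc (y : UnitAddTorus ι) : mk ι (reprIoc y) = y :=
  funext fun _ => AddCircle.coe_equivIoc

theorem measurePreserving_reprIoc [Fintype ι] :
    MeasurePreserving reprIoc volume (volume.restrict (univ.pi fun (_ : ι) => Ioc (0 : ℝ) 1)) := by
  have h1 : MeasurePreserving (fun y : UnitAddCircle => (AddCircle.equivIoc 1 0 y : ℝ)) volume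
      (volume.restrict (Ioc 0 (0 + 1))) :=
    (measurePreserving_subtype_coe measurableSet_Ioc).comp (AddCircle.measurePreserving_equivIoc 1)
  have := measurePreserving_pi (fun _ => volume)
    (fun (_ : ι) => volume.restrict (Ioc (0 : ℝ) (0 + 1))) fun _ => h1
  rw [← Measure.restrict_pi_pi] at this
  simp only [zero_add] at this
  exact this

theorem exists_eq_add_intCast_of_mk_eq {x y : ι → ℝ} (h : mk ι x = mk ι y) :
    ∃ m : ι → ℤ, y = x + fun i => (m i : ℝ) := by
  have (i : ι) : ∃ m : ℤ, y i = x i + m := by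
    have hi : ((y i - x i : ℝ) : UnitAddCircle) = 0 := by
      simpa only [QuotientAddGroup.mk_sub, sub_eq_zero, mk_apply] using congrFun h.symm i
    obtain ⟨m, hm⟩ := (AddCircle.coe_eq_zero_iff 1).1 hi
    rw [zsmul_eq_mul, mul_one] at hm
    exact ⟨m, by linarith⟩
  choose m hm using this
  exact ⟨m, funext hm⟩

section Periodic

variable {E : Type*} {f : (ι → ℝ) → E}
  (hper : ∀ (x : ι → ℝ) (m : ι → ℤ), f (x + fun i => (m i : ℝ)) = f x)
include hper

theorem comp_reprIoc_mk (x : ι → ℝ) : f (reprIoc (mk ι x)) = f x := by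
  obtain ⟨m, hm⟩ := exists_eq_add_intCast_of_mk_eq (mk_reprIoc (mk ι x)).symm
  rw [hm, hper]

theorem comp_reprIoc_add_mk (y : UnitAddTorus ι) (x : ι → ℝ) :
    f (reprIoc (y + mk ι x)) = f (reprIoc y + x) := by
  rw [← comp_reprIoc_mk hper (reprIoc y + x), map_add, mk_reprIoc]

end Periodic

noncomputable def xray {E : Type*} [NormedAddCommGroup E] [NormedSpace ℝ E]
    (F : UnitAddTorus ι → E) (v : ι → ℤ) (y : UnitAddTorus ι) : E :=
  ∫ t in (0 : ℝ)..1, F (y + mk ι (t • fun i => (v i : ℝ)))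

theorem xray_comp_reprIoc {E : Type*} [NormedAddCommGroup E] [NormedSpace ℝ E] {f : (ι → ℝ) → E}
    (hper : ∀ (x : ι → ℝ) (m : ι → ℤ), f (x + fun i => (m i : ℝ)) = f x) (v : ι → ℤ)
    (y : UnitAddTorus ι) :
    xray (f ∘ reprIoc) v y = ∫ t in (0 : ℝ)..1, f (reprIoc y + t • fun i => (v i : ℝ)) := by
  simp only [xray, Function.comp_apply, comp_reprIoc_add_mk hper]

variable [Fintype ι]

theorem mFourier_add_apply (k : ι → ℤ) (y z : UnitAddTorus ι) :
    mFourier k (y + z) = mFourier k y * mFourier k z := by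
  simp [mFourier, fourier_apply, smul_add, AddCircle.toCircle_add, Finset.prod_mul_distrib]

theorem mFourier_mk (k : ι → ℤ) (x : ι → ℝ) :
    mFourier k (mk ι x) = Complex.exp (2 * π * Complex.I * ∑ i, k i * x i) := by
  simp [mFourier, ← Complex.exp_sum, Finset.mul_sum, mul_assoc]

theorem mFourier_mk_smul_eq_one {k v : ι → ℤ} (hvk : v ⬝ᵥ k = 0) (t : ℝ) :
    mFourier k (mk ι (t • fun i => (v i : ℝ))) = 1 := by
  have : ∑ i, (k i : ℝ) * (t • fun i => (v i : ℝ)) i = t * ((v ⬝ᵥ k : ℤ) : ℝ) := by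
    simp only [dotProduct, Int.cast_sum, Int.cast_mul, Finset.mul_sum, Pi.smul_apply, smul_eq_mul]
    exact Finset.sum_congr rfl fun i _ => by ring
  rw [mFourier_mk, this, hvk]
  simp

theorem integral_mul_eq_zero_of_forall_mFourier {μ : Measure (UnitAddTorus ι)}
    {F : UnitAddTorus ι → ℂ} (hF : Integrable F μ)
    (h : ∀ k, ∫ y, mFourier k y * F y ∂μ = 0) (G : C(UnitAddTorus ι, ℂ)) :
    ∫ y, G y * F y ∂μ = 0 := by
  have hint (G : C(UnitAddTorus ι, ℂ)) : Integrable (fun y => G y * F y) μ :=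
    hF.bdd_mul G.continuous.aestronglyMeasurable (ae_of_all _ G.norm_coe_le_norm)
  let Λ : C(UnitAddTorus ι, ℂ) →L[ℂ] ℂ := LinearMap.mkContinuous
    { toFun := fun G => ∫ y, G y * F y ∂μ
      map_add' := fun G H => by
        simp only [ContinuousMap.add_apply, add_mul]
        exact integral_add (hint G) (hint H)
      map_smul' := fun c G => by
        simp only [ContinuousMap.smul_apply, smul_eq_mul, mul_assoc, RingHom.id_apply]
        exact integral_const_mul c _ }
    (∫ y, ‖F y‖ ∂μ) fun G => by
      rw [mul_comm, ← integral_const_mul]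
      refine norm_integral_le_of_norm_le (hF.norm.const_mul _) (ae_of_all _ fun y => ?_)
      rw [norm_mul]
      exact mul_le_mul_of_nonneg_right (G.norm_coe_le_norm y) (norm_nonneg _)
  have hΛ : Λ = 0 := ContinuousLinearMap.ext_on
    (Submodule.dense_iff_topologicalClosure_eq_top.2 span_mFourier_closure_eq_top)
    (by rintro - ⟨k, rfl⟩; exact h k)
  exact congrArg (· G) hΛ

theorem ae_eq_zero_of_xray_ae_eq_zero [Nontrivial ι] {F : UnitAddTorus ι → ℂ}
    (hF : Integrable F) (hX : ∀ v : ι → ℤ, v ≠ 0 → xray F v =ᵐ[volume] 0) :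
    F =ᵐ[volume] 0 := by
  have hcoeff (k : ι → ℤ) : ∫ y, mFourier k y * F y = 0 := by
    obtain ⟨v, hv0, hvk⟩ := exists_ne_zero_dotProduct_eq_zero k
    exact integral_mul_eq_zero_of_intervalIntegral_comp_add_eq_zero hF
      (mFourier k).continuous.aestronglyMeasurable (mFourier k).norm_coe_le_norm
      (c := fun t => mk ι (t • fun i => (v i : ℝ)))
      ((measurePreserving_mk 0).measurable.comp (measurable_id.smul_const _))
      (fun y t => by rw [mFourier_add_apply, mFourier_mk_smul_eq_one hvk, mul_one]) (hX v hv0)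
  refine ae_eq_zero_of_integral_boundedContinuous_smul_eq_zero hF fun G => ?_
  have := integral_mul_eq_zero_of_forall_mFourier hF hcoeff ⟨fun y => ((G y : ℝ) : ℂ), by fun_prop⟩
  simpa only [Complex.real_smul, ContinuousMap.coe_mk] using this

end UnitAddTorus

open UnitAddTorus in
/-- Injectivity of the X-ray transform on `L¹(𝕋ⁿ)`, `n ≥ 2`: if for every nonzero
`v ∈ ℤⁿ` the function `x ↦ ∫₀¹ f(x+tv) dt` vanishes a.e., then `f = 0` a.e. -/
theorem xray_injective_L1 (n : ℕ) (hn : 2 ≤ n) (f : (Fin n → ℝ) → ℂ)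
    (hper : ∀ (x : Fin n → ℝ) (m : Fin n → ℤ), f (x + fun i => (m i : ℝ)) = f x)
    (hf : IntegrableOn f (Set.Icc (0 : Fin n → ℝ) 1))
    (h : ∀ v : Fin n → ℤ, v ≠ 0 →
      (fun x : Fin n → ℝ => ∫ t in (0:ℝ)..1, f (x + t • fun i => (v i : ℝ)))
        =ᵐ[volume] 0) :
    f =ᵐ[volume] 0 := by
  have : Nontrivial (Fin n) := Fin.nontrivial_iff_two_le.2 hn
  have hF : Integrable (f ∘ reprIoc) := measurePreserving_reprIoc.integrable_comp_of_integrable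
    (hf.mono_set ((pi_univ_Ioc_subset 0 1).trans Ioc_subset_Icc_self))
  have hFX (v : Fin n → ℤ) (hv : v ≠ 0) : xray (f ∘ reprIoc) v =ᵐ[volume] 0 := by
    filter_upwards [measurePreserving_reprIoc.quasiMeasurePreserving.ae
      (ae_restrict_of_ae (h v hv))] with y hy
    rw [xray_comp_reprIoc hper]
    exact hy
  filter_upwards [ae_comp_mk (ae_eq_zero_of_xray_ae_eq_zero hF hFX)] with x hx
  simpa only [Function.comp_apply, comp_reprIoc_mk hper, Pi.zero_apply] using hx
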